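/- The rational map Φ(r₁,r₂) = (I₁(r₁,r₂), I₂(r₁,r₂), I₃(r₁,r₂)) takes the values: Φ(−512/2187, −256/6561) = (−8019/20, −1240029/200, −531441/100000), Φ(2/243, 1/11664) = (81, −5103/25, −729/12500), and Φ(−4000/2187, 2500/6561) = (729/2116, 1240029/97336, 531441/13181630464). (These are the singular points of the birational parametrization of the Shaska surface 𝔖₃ and their images in the moduli space, which correspond to genus 2 curves with automorphism group D₄, D₄ and D₆.) -/
import Mathlib


/-- The absolute invariant `i₁` of a genus 2 curve with `(3,3)`-split Jacobian,
as a rational function of the invariants `r₁, r₂` of the associated pair of cubics. -/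
noncomputable def I1 (r1 r2 : ℂ) : ℂ :=
  (9/4) * (13824*r1^3*r2^2 + 442368*r1^2*r2^3 + 5308416*r1*r2^4 + 192*r1^4*r2
      + r1^5 + 786432*r1*r2^3 + 9437184*r2^4)
    / (r1 * (-1152*r2^2 + 96*r2*r1 + r1^2)^2)

/-- The absolute invariant `i₂` of a genus 2 curve with `(3,3)`-split Jacobian,
as a rational function of the invariants `r₁, r₂` of the associated pair of cubics. -/
noncomputable def I2 (r1 r2 : ℂ) : ℂ :=
  (27 / (8 * r1^2 * (-1152*r2^2 + 96*r2*r1 + r1^2)^3)) *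
    (79626240*r1^4*r2^4 - 4076863488*r1^2*r2^5 + 34560*r1^6*r2^2
      + 12230590464*r1^2*r2^6 + 32614907904*r1*r2^6 + 14495514624*r2^6
      + 288*r1^7*r2 + 2211840*r1^5*r2^3 + r1^8 - 212336640*r1^3*r2^4
      + 1528823808*r1^3*r2^5 - 2359296*r1^4*r2^3)

/-- The absolute invariant `i₃` of a genus 2 curve with `(3,3)`-split Jacobian,
as a rational function of the invariants `r₁, r₂` of the associated pair of cubics. -/
noncomputable def I3 (r1 r2 : ℂ) : ℂ :=
  -521838526464 * r2^9 / (r1^2 * (-1152*r2^2 + 96*r2*r1 + r1^2)^5)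

/-- Values of the birational parametrization `Φ = (I₁,I₂,I₃)` of the Shaska surface `𝔖₃`
at its three singular points: the images are the absolute invariants of genus 2 curves
with automorphism group `D₄`, `D₄` and `D₆`. -/
theorem stmt_9 :
    (I1 (-512/2187) (-256/6561), I2 (-512/2187) (-256/6561), I3 (-512/2187) (-256/6561))
      = (-8019/20, -1240029/200, -531441/100000) ∧
    (I1 (2/243) (1/11664), I2 (2/243) (1/11664), I3 (2/243) (1/11664))
      = (81, -5103/25, -729/12500) ∧
    (I1 (-4000/2187) (2500/6561), I2 (-4000/2187) (2500/6561), I3 (-4000/2187) (2500/6561))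
      = (729/2116, 1240029/97336, 531441/13181630464) := by
  refine ⟨?_, ?_, ?_⟩ <;> simp only [I1, I2, I3] <;> norm_num
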